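/- Let v ∈ ℂ^N with v ≠ 0, let h be a positive-definite Hermitian N×N matrix, let P: ℂ^{1×N} → ℂ be a homogeneous polynomial function of degree p on row vectors, and let Q: ℂ^N → ℂ be any polynomial function. Then for all Hermitian N×N matrices H_0, …, H_{N−1}: Σ_{j=0}^{N−1} (−1)^j · (d/dt at t = 0 of [ (v*(h+tH_j)v)^{−N−p} · conj(Q(v)) · P(v*(h+tH_j)) · pbar(v, h+tH_j)(H_0, …, H_{j−1}, H_{j+1}, …, H_{N−1}) ]) = 0. In other words, the (N−1)-form (v*hv)^{−N−p} conj(Q(v)) P(v*h) p̄(v) on positive-definite Hermitian matrices is closed. -/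

import Mathlib

open Matrix BigOperators

noncomputable section

/-- The `i`-th entry of the row vector `v* h`, where `v*` is the conjugate transpose of the
column vector `v`. -/
def vstarM {N : ℕ} (v : Fin N → ℂ) (h : Matrix (Fin N) (Fin N) ℂ) (i : Fin N) : ℂ :=
  ∑ j, (starRingEnd ℂ) (v j) * h j i

/-- The scalar `v* h v`. -/
def vhv {N : ℕ} (v : Fin N → ℂ) (h : Matrix (Fin N) (Fin N) ℂ) : ℂ :=
  ∑ i, vstarM v h i * v i

/-- `pbar(v,h)(H_1,…,H_{N−1})` : the value of the `(N-1)`-form `p̄(v)` at the point `h` on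
the tangent vectors `H_1,…,H_{N-1}`.  Here `N = n+2`; the matrix `M⁽ⁱ⁾` has `(k,l)`-entry
`(v*H_l)_{r_k}` where `r` is the decreasing enumeration of `{0,…,N-1}` omitting `i`
(`r k = Fin.rev ((Fin.rev i).succAbove k)`), and the sign `(−1)^{i−1}` (1-based) is
`(−1)^{i}` in 0-based indexing. -/
def pbar {n : ℕ} (v : Fin (n + 2) → ℂ) (h : Matrix (Fin (n + 2)) (Fin (n + 2)) ℂ)
    (H : Fin (n + 1) → Matrix (Fin (n + 2)) (Fin (n + 2)) ℂ) : ℂ :=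
  2 * (-1 : ℂ) ^ ((n + 2) * (n + 1) / 2) *
    ∑ i : Fin (n + 2), (-1 : ℂ) ^ (i : ℕ) * vstarM v h i *
      Matrix.det (Matrix.of fun k l : Fin (n + 1) =>
        vstarM v (H l) (Fin.rev ((Fin.rev i).succAbove k)))

/-- `dpbar(v)(H_1,…,H_N) = 2N(−1)^{(N+2)(N−1)/2} det M` where `M` has `(k,l)`-entry
`(v*H_l)_{N+1−k}` (1-based), i.e. `(v*H_l)_{Fin.rev k}` in 0-based indexing. -/
def dpbar {n : ℕ} (v : Fin (n + 2) → ℂ)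
    (H : Fin (n + 2) → Matrix (Fin (n + 2)) (Fin (n + 2)) ℂ) : ℂ :=
  2 * (n + 2) * (-1 : ℂ) ^ ((n + 4) * (n + 1) / 2) *
    Matrix.det (Matrix.of fun k l : Fin (n + 2) => vstarM v (H l) (Fin.rev k))

open scoped ComplexOrder

/-!
Write `s = v*hv`, `w = v*h` and `y_j = v*H_j`. Along `t ↦ h + tH_j` the quantities `s`, `w` and
`pbar` move affinely, and `pbar v h (H_0,…,Ĥ_j,…) = κ det(w, y_0,…,ŷ_j,…)` for a constant `κ`.
So the alternating sum of derivatives splits into three alternating sums of cofactor type.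
Since the alternating cofactor vector of an `N × (N+1)` matrix lies in its kernel, they evaluate
to `s · det y`, `(w ⬝ ∇P(w)) det y = p P(w) det y` (Euler) and `N det y`; the total is therefore
a multiple of `m + p + N`, which vanishes for the exponent `m = -N-p`.
-/

section Determinant

variable {R : Type*} [CommRing R] {n : ℕ}

theorem det_cons_removeNth (W : Fin (n + 1) → Fin (n + 1) → R) (j : Fin (n + 1)) :
    det (of (vecCons (W j) (j.removeNth W))) = (-1) ^ (j : ℕ) * det (of W) := by
  have := (detRowAlternating : (Fin (n + 1) → R) [⋀^Fin (n + 1)]→ₗ[R] R)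
    |>.neg_one_pow_smul_map_insertNth j (W j) (j.removeNth W)
  rw [Fin.insertNth_self_removeNth, zsmul_eq_mul] at this
  exact this.symm.trans (by push_cast; rfl)

theorem sum_neg_one_pow_mul_det_cons_removeNth_self (W : Fin (n + 1) → Fin (n + 1) → R) :
    ∑ j : Fin (n + 1), (-1) ^ (j : ℕ) * det (of (vecCons (W j) (j.removeNth W)))
      = (n + 1) * det (of W) := by
  simp [det_cons_removeNth, ← mul_assoc, ← pow_add, ← two_mul, pow_mul]

theorem sum_neg_one_pow_mul_det_removeNth_eq_zero (y : Fin (n + 1) → Fin n → R) (k : Fin n) :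
    ∑ l : Fin (n + 1), (-1) ^ (l : ℕ) * y l k * det (of (l.removeNth y)) = 0 := by
  have hB := det_succ_row_zero (of (vecCons (fun l => y l k) (of y)ᵀ))
  rw [det_zero_of_row_eq (Fin.succ_ne_zero k).symm rfl] at hB
  rw [hB]
  refine Finset.sum_congr rfl fun l _ => ?_
  rw [← det_transpose (of (l.removeNth y))]
  rfl

theorem sum_neg_one_pow_mul_dotProduct_mul_det_removeNth_eq_zero (c : Fin n → R)
    (y : Fin (n + 1) → Fin n → R) :
    ∑ l : Fin (n + 1), (-1) ^ (l : ℕ) * (y l ⬝ᵥ c) * det (of (l.removeNth y)) = 0 := by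
  simp only [dotProduct, Finset.sum_mul, Finset.mul_sum]
  rw [Finset.sum_comm]
  refine Finset.sum_eq_zero fun k _ => ?_
  rw [← mul_zero (c k), ← sum_neg_one_pow_mul_det_removeNth_eq_zero y k, Finset.mul_sum]
  exact Finset.sum_congr rfl fun l _ => by ring

theorem sum_neg_one_pow_mul_dotProduct_mul_det_cons_removeNth (c w : Fin (n + 1) → R)
    (W : Fin (n + 1) → Fin (n + 1) → R) :
    ∑ j : Fin (n + 1), (-1) ^ (j : ℕ) * (W j ⬝ᵥ c) * det (of (vecCons w (j.removeNth W)))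
      = (w ⬝ᵥ c) * det (of W) := by
  have hzero := sum_neg_one_pow_mul_dotProduct_mul_det_removeNth_eq_zero c (vecCons w W)
  have hzero' : (0 : Fin (n + 2)).removeNth (vecCons w W) = W := by ext1; simp
  have hsucc (j : Fin (n + 1)) : j.succ.removeNth (vecCons w W) = vecCons w (j.removeNth W) :=
    Fin.cons_comp_succ_succAbove w W j
  rw [Fin.sum_univ_succ] at hzero
  simp only [Fin.val_zero, pow_zero, one_mul, cons_val_zero, hzero', Fin.val_succ, pow_succ,
    cons_val_succ, hsucc, mul_neg_one, neg_mul, Finset.sum_neg_distrib] at hzero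
  linear_combination -hzero

theorem sum_neg_one_pow_mul_det_rev_succAbove (u : Fin (n + 1) → R)
    (Z : Fin n → Fin (n + 1) → R) :
    ∑ i : Fin (n + 1), (-1) ^ (i : ℕ) * u i *
        det (of fun k l : Fin n => Z l (Fin.rev ((Fin.rev i).succAbove k)))
      = Equiv.Perm.sign (Fin.revPerm : Equiv.Perm (Fin n)) * det (of (vecCons u Z)) := by
  rw [det_succ_row_zero, Finset.mul_sum]
  refine Finset.sum_congr rfl fun i _ => ?_
  have hminor : (of fun k l : Fin n => Z l (Fin.rev ((Fin.rev i).succAbove k)))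
      = ((of (vecCons u Z)).submatrix Fin.succ i.succAbove)ᵀ.submatrix Fin.revPerm id := by
    ext k l
    simp [Fin.rev_succAbove]
  rw [hminor, det_permute, det_transpose]
  simp only [of_apply, cons_val_zero]
  ring

end Determinant

namespace MvPolynomial

theorem IsHomogeneous.dotProduct_eval_pderiv {R σ : Type*} [CommSemiring R] [Fintype σ]
    {P : MvPolynomial σ R} {p : ℕ} (hP : P.IsHomogeneous p) (w : σ → R) :
    w ⬝ᵥ (fun i => eval w (pderiv i P)) = p * eval w P := by
  simpa [dotProduct, nsmul_eq_mul] using congrArg (eval w) hP.sum_X_mul_pderiv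

theorem hasDerivAt_eval_add_smul {𝕜 σ : Type*} [NontriviallyNormedField 𝕜] [Fintype σ]
    (P : MvPolynomial σ 𝕜) (w y : σ → 𝕜) :
    HasDerivAt (fun z : 𝕜 => eval (w + z • y) P) (y ⬝ᵥ fun i => eval w (pderiv i P)) 0 := by
  classical
  induction P using MvPolynomial.induction_on with
  | C a => simpa using hasDerivAt_const (0 : 𝕜) a
  | add P Q hP hQ =>
    simp only [map_add]
    exact (hP.fun_add hQ).congr_deriv (by simp [dotProduct, mul_add, Finset.sum_add_distrib])
  | mul_X P i hP =>
    have hXi : HasDerivAt (fun z : 𝕜 => w i + z * y i) (y i) 0 := by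
      simpa using ((hasDerivAt_id (0 : 𝕜)).mul_const (y i)).const_add (w i)
    simp only [map_mul, eval_X, Pi.add_apply, Pi.smul_apply, smul_eq_mul]
    refine (hP.fun_mul hXi).congr_deriv ?_
    have hgrad : (fun k => eval w (pderiv k (P * X i)))
        = w i • (fun k => eval w (pderiv k P)) + eval w P • Pi.single i 1 := by
      ext k
      rcases eq_or_ne k i with rfl | hki
      · simp [pderiv_X, add_comm, mul_comm]
      · simp [pderiv_X, hki, hki.symm, mul_comm]
    rw [hgrad, dotProduct_add, dotProduct_smul, dotProduct_smul, dotProduct_single]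
    simp only [zero_mul, add_zero, zero_smul, smul_eq_mul]
    ring

end MvPolynomial

section RowVector

variable {N : ℕ} (v : Fin N → ℂ)

theorem vstarM_eq_vecMul (h : Matrix (Fin N) (Fin N) ℂ) : vstarM v h = star v ᵥ* h := rfl

theorem vhv_eq_dotProduct (h : Matrix (Fin N) (Fin N) ℂ) : vhv v h = vstarM v h ⬝ᵥ v := rfl

theorem vstarM_add_smul (h H : Matrix (Fin N) (Fin N) ℂ) (t : ℂ) :
    vstarM v (h + t • H) = vstarM v h + t • vstarM v H := by
  simp only [vstarM_eq_vecMul, vecMul_add, vecMul_smul]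

theorem vhv_add_smul (h H : Matrix (Fin N) (Fin N) ℂ) (t : ℂ) :
    vhv v (h + t • H) = vhv v h + t * vhv v H := by
  simp only [vhv_eq_dotProduct, vstarM_add_smul, add_dotProduct, smul_dotProduct, smul_eq_mul]

theorem vhv_ne_zero {v : Fin N → ℂ} (hv : v ≠ 0) {h : Matrix (Fin N) (Fin N) ℂ} (hh : h.PosDef) :
    vhv v h ≠ 0 := by
  rw [vhv_eq_dotProduct, vstarM_eq_vecMul, ← dotProduct_mulVec]
  exact (hh.dotProduct_mulVec_pos hv).ne'

end RowVector

section Pbar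

variable {n : ℕ} (v : Fin (n + 2) → ℂ) (K : Fin (n + 1) → Matrix (Fin (n + 2)) (Fin (n + 2)) ℂ)

theorem pbar_add_smul (h H : Matrix (Fin (n + 2)) (Fin (n + 2)) ℂ) (t : ℂ) :
    pbar v (h + t • H) K = pbar v h K + t * pbar v H K := by
  simp only [pbar, vstarM_add_smul, Pi.add_apply, Pi.smul_apply, smul_eq_mul, add_mul, mul_add,
    Finset.sum_add_distrib, Finset.mul_sum]
  congr 1
  exact Finset.sum_congr rfl fun i _ => by ring

theorem pbar_eq_det (h : Matrix (Fin (n + 2)) (Fin (n + 2)) ℂ) :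
    pbar v h K = 2 * (-1) ^ ((n + 2) * (n + 1) / 2)
      * Equiv.Perm.sign (Fin.revPerm : Equiv.Perm (Fin (n + 1)))
      * det (of (vecCons (vstarM v h) fun l => vstarM v (K l))) := by
  rw [pbar, sum_neg_one_pow_mul_det_rev_succAbove (vstarM v h) fun l => vstarM v (K l)]
  ring

theorem hasDerivAt_vhv_zpow_mul_eval_mul_pbar {h : Matrix (Fin (n + 2)) (Fin (n + 2)) ℂ}
    (hs : vhv v h ≠ 0) (m : ℤ) (c : ℂ) (P : MvPolynomial (Fin (n + 2)) ℂ)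
    (H : Matrix (Fin (n + 2)) (Fin (n + 2)) ℂ) :
    HasDerivAt (fun t : ℝ => vhv v (h + (t : ℂ) • H) ^ m * c
        * MvPolynomial.eval (vstarM v (h + (t : ℂ) • H)) P * pbar v (h + (t : ℂ) • H) K)
      (m * vhv v h ^ (m - 1) * vhv v H * c * MvPolynomial.eval (vstarM v h) P * pbar v h K
        + vhv v h ^ m * c * (vstarM v H ⬝ᵥ fun i => MvPolynomial.eval (vstarM v h)
            (MvPolynomial.pderiv i P)) * pbar v h K
        + vhv v h ^ m * c * MvPolynomial.eval (vstarM v h) P * pbar v H K) 0 := by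
  have hline (a b : ℂ) : HasDerivAt (fun z : ℂ => a + z * b) b 0 := by
    simpa using ((hasDerivAt_id (0 : ℂ)).mul_const b).const_add a
  have hpow : HasDerivAt (fun z : ℂ => (vhv v h + z * vhv v H) ^ m)
      (m * vhv v h ^ (m - 1) * vhv v H) 0 :=
    ((hasDerivAt_zpow m (vhv v h) (Or.inl hs)).comp_of_eq (0 : ℂ)
      (hline (vhv v h) (vhv v H)) (by simp)).congr_deriv (by ring)
  have hprod := ((hpow.mul_const c).fun_mul
    (MvPolynomial.hasDerivAt_eval_add_smul P (vstarM v h) (vstarM v H))).fun_mul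
    (hline (pbar v h K) (pbar v H K))
  simp only [vhv_add_smul, vstarM_add_smul, pbar_add_smul]
  refine (hprod.comp_ofReal (z := 0)).congr_deriv ?_
  simp only [zero_mul, zero_smul, add_zero]
  ring

end Pbar

theorem sum_neg_one_pow_mul_directional_derivative_eq_zero {K : Type*} [Field K] {n p : ℕ}
    {P : MvPolynomial (Fin (n + 1)) K} (hP : P.IsHomogeneous p) (v w : Fin (n + 1) → K)
    (hs : w ⬝ᵥ v ≠ 0) (Y : Fin (n + 1) → Fin (n + 1) → K) {m : ℤ} (hm : m + p + (n + 1) = 0) :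
    ∑ j : Fin (n + 1), (-1) ^ (j : ℕ) *
      (m * (w ⬝ᵥ v) ^ (m - 1) * (Y j ⬝ᵥ v) * MvPolynomial.eval w P
          * det (of (vecCons w (j.removeNth Y)))
        + (w ⬝ᵥ v) ^ m * (Y j ⬝ᵥ fun i => MvPolynomial.eval w (MvPolynomial.pderiv i P))
          * det (of (vecCons w (j.removeNth Y)))
        + (w ⬝ᵥ v) ^ m * MvPolynomial.eval w P * det (of (vecCons (Y j) (j.removeNth Y)))) = 0 := by
  set s := w ⬝ᵥ v
  have hsm : s ^ m = s ^ (m - 1) * s := by rw [← zpow_add_one₀ hs, sub_add_cancel]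
  have hmK : (m : K) + p + (n + 1) = 0 := by simpa using congrArg (Int.cast : ℤ → K) hm
  calc _ = s ^ (m - 1) * (m * MvPolynomial.eval w P
          * ∑ j : Fin (n + 1), (-1) ^ (j : ℕ) * (Y j ⬝ᵥ v) * det (of (vecCons w (j.removeNth Y)))
        + s * ∑ j : Fin (n + 1), (-1) ^ (j : ℕ)
          * (Y j ⬝ᵥ fun i => MvPolynomial.eval w (MvPolynomial.pderiv i P))
          * det (of (vecCons w (j.removeNth Y)))
        + s * MvPolynomial.eval w P
          * ∑ j : Fin (n + 1), (-1) ^ (j : ℕ) * det (of (vecCons (Y j) (j.removeNth Y)))) := by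
        simp only [Finset.mul_sum, ← Finset.sum_add_distrib, hsm]
        exact Finset.sum_congr rfl fun j _ => by ring
    _ = 0 := by
      rw [sum_neg_one_pow_mul_dotProduct_mul_det_cons_removeNth,
        sum_neg_one_pow_mul_dotProduct_mul_det_cons_removeNth,
        sum_neg_one_pow_mul_det_cons_removeNth_self, hP.dotProduct_eval_pderiv]
      linear_combination s ^ (m - 1) * s * MvPolynomial.eval w P * det (of Y) * hmK

theorem pbar_form_with_coeffs_closed_general {n : ℕ} (p : ℕ) (v : Fin (n + 2) → ℂ) (hv : v ≠ 0)
    (h : Matrix (Fin (n + 2)) (Fin (n + 2)) ℂ) (hh : h.PosDef)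
    (P : MvPolynomial (Fin (n + 2)) ℂ) (hP : P.IsHomogeneous p)
    (Q : MvPolynomial (Fin (n + 2)) ℂ)
    (H : Fin (n + 2) → Matrix (Fin (n + 2)) (Fin (n + 2)) ℂ) :
    ∑ j : Fin (n + 2), (-1 : ℂ) ^ (j : ℕ) *
        deriv (fun t : ℝ =>
          (vhv v (h + (t : ℂ) • H j)) ^ (-(n + 2 : ℤ) - (p : ℤ)) *
            (starRingEnd ℂ) (MvPolynomial.eval v Q) *
            MvPolynomial.eval (vstarM v (h + (t : ℂ) • H j)) P *
            pbar v (h + (t : ℂ) • H j) (fun k => H (j.succAbove k))) 0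
      = 0 := by
  have hs : vhv v h ≠ 0 := vhv_ne_zero hv hh
  have hderiv (j : Fin (n + 2)) := (hasDerivAt_vhv_zpow_mul_eval_mul_pbar v
    (fun k => H (j.succAbove k)) hs (-(n + 2 : ℤ) - p)
    ((starRingEnd ℂ) (MvPolynomial.eval v Q)) P (H j)).deriv
  obtain ⟨κ, hpbar⟩ : ∃ κ : ℂ, ∀ G (j : Fin (n + 2)), pbar v G (fun k => H (j.succAbove k))
      = κ * det (of (vecCons (vstarM v G) (j.removeNth fun j => vstarM v (H j)))) :=
    ⟨_, fun G _ => pbar_eq_det v _ G⟩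
  have hcore := congrArg (κ * (starRingEnd ℂ) (MvPolynomial.eval v Q) * ·)
    (sum_neg_one_pow_mul_directional_derivative_eq_zero hP v (vstarM v h) hs
      (fun j => vstarM v (H j)) (m := -(n + 2 : ℤ) - p) (by push_cast; ring))
  simp only [mul_zero, Finset.mul_sum] at hcore
  simp only [hderiv]
  simp only [hpbar, vhv_eq_dotProduct]
  rw [← hcore]
  exact Finset.sum_congr rfl fun j _ => by ring

/-- for `v ≠ 0`, `h` positive definite Hermitian, `P` a homogeneous polynomial
of degree `p` on row vectors and `Q` any polynomial on `ℂ^N`, the `(N−1)`-form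
`(v*hv)^{−N−p} conj(Q(v)) P(v*h) p̄(v)` on positive definite Hermitian matrices is closed:
for all Hermitian `H_0,…,H_{N−1}`,
`Σ_j (−1)^j ∂_t|_{t=0}[ (v*(h+tH_j)v)^{−N−p} conj(Q(v)) P(v*(h+tH_j))
    pbar(v,h+tH_j)(H_0,…,Ĥ_j,…,H_{N−1}) ] = 0`. -/
theorem pbar_form_with_coeffs_closed {n : ℕ} (p : ℕ) (v : Fin (n + 2) → ℂ) (hv : v ≠ 0)
    (h : Matrix (Fin (n + 2)) (Fin (n + 2)) ℂ) (hh : h.PosDef)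
    (P : MvPolynomial (Fin (n + 2)) ℂ) (hP : P.IsHomogeneous p)
    (Q : MvPolynomial (Fin (n + 2)) ℂ)
    (H : Fin (n + 2) → Matrix (Fin (n + 2)) (Fin (n + 2)) ℂ)
    (hH : ∀ j, (H j).IsHermitian) :
    ∑ j : Fin (n + 2), (-1 : ℂ) ^ (j : ℕ) *
        deriv (fun t : ℝ =>
          (vhv v (h + (t : ℂ) • H j)) ^ (-(n + 2 : ℤ) - (p : ℤ)) *
            (starRingEnd ℂ) (MvPolynomial.eval v Q) *
            MvPolynomial.eval (vstarM v (h + (t : ℂ) • H j)) P *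
            pbar v (h + (t : ℂ) • H j) (fun k => H (j.succAbove k))) 0
      = 0 :=
  pbar_form_with_coeffs_closed_general p v hv h hh P hP Q H

end
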